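/- For every ϵ > 0 there exists a constant C > 0 such that for all g ∈ (1,2], inf_{(A,B)∈X} J_{ϵ,g}(A,B) ≤ C(g−1)^{1/2}. In particular, for each fixed ϵ > 0, lim_{g→1⁺} inf_{(A,B)∈X} J_{ϵ,g}(A,B) = 0. -/

import Mathlib

open Filter MeasureTheory
open scoped ENNReal

/-- `P(a,b) = (1/4)(a²+b²−1)² + (1/2)(g−1)a²b²`. -/
noncomputable def Pfun (g a b : ℝ) : ℝ :=
  (1/4) * (a ^ 2 + b ^ 2 - 1) ^ 2 + (1/2) * (g - 1) * a ^ 2 * b ^ 2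

/-- The functional `J_{ϵ,g}(A,B) = ∫_ℝ (ϵ/2)A''² + (1/2)B'² + P(A,B) ∈ [0,∞]`. -/
noncomputable def Jfun (ϵ g : ℝ) (A B : ℝ → ℝ) : ℝ≥0∞ :=
  ∫⁻ x : ℝ, ENNReal.ofReal ((ϵ/2) * (iteratedDeriv 2 A x) ^ 2
    + (1/2) * (deriv B x) ^ 2 + Pfun g (A x) (B x))

/-- The class `X`: `A ∈ C²(ℝ)`, `B ∈ C¹(ℝ)` with heteroclinic limits
`(1,0)` at `−∞` and `(0,1)` at `+∞`. -/
def memX (A B : ℝ → ℝ) : Prop :=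
  ContDiff ℝ 2 A ∧ ContDiff ℝ 1 B ∧
  Tendsto (fun x => (A x, B x)) atBot (nhds ((1 : ℝ), (0 : ℝ))) ∧
  Tendsto (fun x => (A x, B x)) atTop (nhds ((0 : ℝ), (1 : ℝ)))

private lemma deriv_eq_zero_of_eventually_const {f : ℝ → ℝ} {y c : ℝ}
    (h : ∀ᶠ x in nhds y, f x = c) : deriv f y = 0 := by
  have h' : f =ᶠ[nhds y] fun _ => c := h
  rw [h'.deriv_eq, deriv_const]

private lemma sT_derivs_zero :
    ∀ y : ℝ, (y ≤ 0 ∨ 1 ≤ y) →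
      deriv Real.smoothTransition y = 0 ∧ deriv (deriv Real.smoothTransition) y = 0 := by
  set s := Real.smoothTransition with hs_def
  have hs : ContDiff ℝ (⊤ : ℕ∞) s := Real.smoothTransition.contDiff
  have hds : ContDiff ℝ (⊤ : ℕ∞) (deriv s) := (contDiff_infty_iff_deriv.mp hs).2
  have hdds : Continuous (deriv (deriv s)) := (contDiff_infty_iff_deriv.mp hds).2.continuous
  have h1 : ∀ y : ℝ, (y < 0 ∨ 1 < y) → deriv s y = 0 := by
    intro y hy
    rcases hy with hy | hy
    · exact deriv_eq_zero_of_eventually_const (c := 0)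
        (Filter.eventually_of_mem (isOpen_Iio.mem_nhds hy)
          (fun x hx => Real.smoothTransition.zero_of_nonpos (le_of_lt hx)))
    · exact deriv_eq_zero_of_eventually_const (c := 1)
        (Filter.eventually_of_mem (isOpen_Ioi.mem_nhds hy)
          (fun x hx => Real.smoothTransition.one_of_one_le (le_of_lt hx)))
  have e1 : Set.EqOn (deriv s) 0 (Set.Iic 0) := by
    have h : Set.EqOn (deriv s) 0 (Set.Iio 0) := fun x hx => h1 x (Or.inl hx)
    have := h.closure hds.continuous continuous_const
    rwa [closure_Iio] at this
  have e2 : Set.EqOn (deriv s) 0 (Set.Ici 1) := by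
    have h : Set.EqOn (deriv s) 0 (Set.Ioi 1) := fun x hx => h1 x (Or.inr hx)
    have := h.closure hds.continuous continuous_const
    rwa [closure_Ioi] at this
  have h2 : ∀ y : ℝ, (y < 0 ∨ 1 < y) → deriv (deriv s) y = 0 := by
    intro y hy
    rcases hy with hy | hy
    · exact deriv_eq_zero_of_eventually_const (c := 0)
        (Filter.eventually_of_mem (isOpen_Iio.mem_nhds hy)
          (fun x hx => e1 (Set.mem_Iic.mpr (le_of_lt hx))))
    · exact deriv_eq_zero_of_eventually_const (c := 0)
        (Filter.eventually_of_mem (isOpen_Ioi.mem_nhds hy)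
          (fun x hx => e2 (Set.mem_Ici.mpr (le_of_lt hx))))
  have e1' : Set.EqOn (deriv (deriv s)) 0 (Set.Iic 0) := by
    have h : Set.EqOn (deriv (deriv s)) 0 (Set.Iio 0) := fun x hx => h2 x (Or.inl hx)
    have := h.closure hdds continuous_const
    rwa [closure_Iio] at this
  have e2' : Set.EqOn (deriv (deriv s)) 0 (Set.Ici 1) := by
    have h : Set.EqOn (deriv (deriv s)) 0 (Set.Ioi 1) := fun x hx => h2 x (Or.inr hx)
    have := h.closure hdds continuous_const
    rwa [closure_Ioi] at this
  intro y hy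
  rcases hy with hy | hy
  · exact ⟨e1 hy, e1' hy⟩
  · exact ⟨e2 hy, e2' hy⟩

private lemma exists_M : ∃ M : ℝ, 0 ≤ M ∧ ∀ y : ℝ,
    |deriv Real.smoothTransition y| ≤ M ∧ |deriv (deriv Real.smoothTransition) y| ≤ M := by
  set s := Real.smoothTransition with hs_def
  have hs : ContDiff ℝ (⊤ : ℕ∞) s := Real.smoothTransition.contDiff
  have hds : ContDiff ℝ (⊤ : ℕ∞) (deriv s) := (contDiff_infty_iff_deriv.mp hs).2
  have hdds : Continuous (deriv (deriv s)) := (contDiff_infty_iff_deriv.mp hds).2.continuous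
  have hcont : Continuous (fun y => |deriv s y| + |deriv (deriv s) y|) :=
    (hds.continuous.abs).add (hdds.abs)
  obtain ⟨C, hC⟩ := (isCompact_Icc (a := (0:ℝ)) (b := 1)).exists_bound_of_continuousOn
    hcont.continuousOn
  refine ⟨max C 0, le_max_right _ _, ?_⟩
  intro y
  by_cases hy : y ∈ Set.Icc (0:ℝ) 1
  · have := hC y hy
    rw [Real.norm_eq_abs, abs_of_nonneg (by positivity)] at this
    constructor
    · calc |deriv s y| ≤ |deriv s y| + |deriv (deriv s) y| := le_add_of_nonneg_right (abs_nonneg _)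
        _ ≤ C := this
        _ ≤ max C 0 := le_max_left _ _
    · calc |deriv (deriv s) y| ≤ |deriv s y| + |deriv (deriv s) y| := le_add_of_nonneg_left (abs_nonneg _)
        _ ≤ C := this
        _ ≤ max C 0 := le_max_left _ _
  · have hy' : y ≤ 0 ∨ 1 ≤ y := by
      rcases not_and_or.mp (Set.mem_Icc.not.mp hy) with h | h
      · exact Or.inl (le_of_not_ge h)
      · exact Or.inr (le_of_not_ge h)
    obtain ⟨ha, hb⟩ := sT_derivs_zero y hy'
    rw [ha, hb]
    simp

set_option maxHeartbeats 2000000 in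
private lemma construction (ϵ : ℝ) (hϵ : 0 < ϵ) :
    ∃ C > (0:ℝ), ∀ g ∈ Set.Ioc (1:ℝ) 2,
      (⨅ (A : ℝ → ℝ) (B : ℝ → ℝ) (_ : memX A B), Jfun ϵ g A B)
        ≤ ENNReal.ofReal (C * Real.sqrt (g - 1)) := by
  obtain ⟨M, hM0, hM⟩ := exists_M
  set s := Real.smoothTransition with hs_def
  have hsD : Differentiable ℝ s :=
    (Real.smoothTransition.contDiff (n := (⊤ : ℕ∞))).differentiable (by simp)
  have hs'D : Differentiable ℝ (deriv s) :=
    ((contDiff_infty_iff_deriv.mp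
      (Real.smoothTransition.contDiff (n := (⊤ : ℕ∞)))).2).differentiable (by simp)
  set c : ℝ := Real.pi / 2 with hc_def
  have hc : 0 < c := by rw [hc_def]; positivity
  set K : ℝ := c^2*M^2 + c*M with hK_def
  set C : ℝ := (ϵ/2)*K^2 + c^2*M^2/2 + 1/8 with hC_def
  have hC0 : 0 < C := by
    have : 0 ≤ (ϵ/2)*K^2 := by positivity
    have : 0 ≤ c^2*M^2/2 := by positivity
    rw [hC_def]; linarith
  refine ⟨C, hC0, ?_⟩
  intro g hg
  set δ : ℝ := g - 1 with hδ_def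
  have hδ0 : 0 < δ := sub_pos.mpr hg.1
  have hδ1 : δ ≤ 1 := by have := hg.2; rw [hδ_def]; linarith
  set r : ℝ := Real.sqrt δ with hr_def
  have hr0 : 0 < r := Real.sqrt_pos.mpr hδ0
  have hr1 : r ≤ 1 := by
    rw [hr_def, show (1:ℝ) = Real.sqrt 1 from (Real.sqrt_one).symm]
    exact Real.sqrt_le_sqrt hδ1
  have hrr : r * r = δ := Real.mul_self_sqrt hδ0.le
  set L : ℝ := r⁻¹ with hL_def
  have hL0 : 0 < L := by rw [hL_def]; positivity
  have hLinv : L⁻¹ = r := by rw [hL_def, inv_inv]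
  -- the test functions
  set f : ℝ → ℝ := fun x => c * s (x / L) with hf_def
  set F' : ℝ → ℝ := fun x => c * (deriv s (x / L) * L⁻¹) with hF'_def
  set G' : ℝ → ℝ := fun x => c * (deriv (deriv s) (x / L) * L⁻¹ * L⁻¹) with hG'_def
  set A : ℝ → ℝ := fun x => Real.cos (f x) with hA_def
  set B : ℝ → ℝ := fun x => Real.sin (f x) with hB_def
  set A1 : ℝ → ℝ := fun x => -Real.sin (f x) * F' x with hA1_def
  set A2 : ℝ → ℝ := fun x => -(Real.cos (f x) * F' x) * F' x + -Real.sin (f x) * G' x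
    with hA2_def
  have hdiv : ∀ x : ℝ, HasDerivAt (fun x : ℝ => x / L) L⁻¹ x := by
    intro x
    simpa using (hasDerivAt_id x).div_const L
  have hf : ∀ x, HasDerivAt f (F' x) x := by
    intro x
    exact (HasDerivAt.comp x (hsD (x / L)).hasDerivAt (hdiv x)).const_mul c
  have hF' : ∀ x, HasDerivAt F' (G' x) x := by
    intro x
    exact ((HasDerivAt.comp x (hs'D (x / L)).hasDerivAt (hdiv x)).mul_const L⁻¹).const_mul c
  have hA : ∀ x, HasDerivAt A (A1 x) x := fun x =>
    (Real.hasDerivAt_cos (f x)).comp x (hf x)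
  have hB : ∀ x, HasDerivAt B (Real.cos (f x) * F' x) x := fun x =>
    (Real.hasDerivAt_sin (f x)).comp x (hf x)
  have hderivB : deriv B = fun x => Real.cos (f x) * F' x := funext fun x => (hB x).deriv
  have hA1 : ∀ x, HasDerivAt A1 (A2 x) x := by
    intro x
    have hu : HasDerivAt (fun x => -Real.sin (f x)) (-(Real.cos (f x) * F' x)) x :=
      ((Real.hasDerivAt_sin (f x)).comp x (hf x)).neg
    exact hu.mul (hF' x)
  have hiter : iteratedDeriv 2 A = A2 := by
    have h1 : deriv A = A1 := funext fun x => (hA x).deriv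
    rw [show (2:ℕ) = 1 + 1 from rfl, iteratedDeriv_succ, iteratedDeriv_one, h1]
    exact funext fun x => (hA1 x).deriv
  -- bounds
  have hF'bd : ∀ x, |F' x| ≤ c * (M * L⁻¹) := by
    intro x
    rw [hF'_def]
    rw [abs_mul, abs_mul, abs_of_pos hc, abs_of_pos (by positivity : (0:ℝ) < L⁻¹)]
    have := (hM (x/L)).1
    gcongr
  have hG'bd : ∀ x, |G' x| ≤ c * (M * L⁻¹ * L⁻¹) := by
    intro x
    rw [hG'_def]
    rw [abs_mul, abs_mul, abs_mul, abs_of_pos hc,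
      abs_of_pos (by positivity : (0:ℝ) < L⁻¹)]
    have := (hM (x/L)).2
    gcongr
  have hsin2 : ∀ x, A x ^ 2 + B x ^ 2 = 1 := by
    intro x
    simp only [hA_def, hB_def]
    exact Real.cos_sq_add_sin_sq (f x)
  have hA2bd : ∀ x, |A2 x| ≤ K * (L⁻¹ * L⁻¹) := by
    intro x
    have h1 : |(-(Real.cos (f x) * F' x)) * F' x| ≤ (c * (M * L⁻¹)) * (c * (M * L⁻¹)) := by
      rw [abs_mul, abs_neg, abs_mul]
      have hcos : |Real.cos (f x)| ≤ 1 := Real.abs_cos_le_one _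
      have := hF'bd x
      calc |Real.cos (f x)| * |F' x| * |F' x|
          ≤ 1 * (c * (M * L⁻¹)) * (c * (M * L⁻¹)) := by
            gcongr <;> exact abs_nonneg _
        _ = (c * (M * L⁻¹)) * (c * (M * L⁻¹)) := by ring
    have h2 : |(-Real.sin (f x)) * G' x| ≤ 1 * (c * (M * L⁻¹ * L⁻¹)) := by
      rw [abs_mul, abs_neg]
      have hsin : |Real.sin (f x)| ≤ 1 := Real.abs_sin_le_one _
      have := hG'bd x
      gcongr
    calc |A2 x| ≤ |(-(Real.cos (f x) * F' x)) * F' x| + |(-Real.sin (f x)) * G' x| :=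
          abs_add_le _ _
      _ ≤ (c * (M * L⁻¹)) * (c * (M * L⁻¹)) + 1 * (c * (M * L⁻¹ * L⁻¹)) := by
          exact add_le_add h1 h2
      _ = K * (L⁻¹ * L⁻¹) := by rw [hK_def]; ring
  have hBbd : ∀ x, |deriv B x| ≤ c * (M * L⁻¹) := by
    intro x
    rw [hderivB]
    calc |Real.cos (f x) * F' x| = |Real.cos (f x)| * |F' x| := abs_mul _ _
      _ ≤ 1 * (c * (M * L⁻¹)) := by
          have := hF'bd x
          have hcos : |Real.cos (f x)| ≤ 1 := Real.abs_cos_le_one _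
          gcongr <;> exact abs_nonneg _
      _ = c * (M * L⁻¹) := one_mul _
  have hE0 : ∀ x, x ∉ Set.Icc (0:ℝ) L → (ϵ/2) * (iteratedDeriv 2 A x) ^ 2
      + (1/2) * (deriv B x) ^ 2 + Pfun g (A x) (B x) = 0 := by
    intro x hx
    have hx' : x / L ≤ 0 ∨ 1 ≤ x / L := by
      rcases not_and_or.mp (Set.mem_Icc.not.mp hx) with h | h
      · exact Or.inl (div_nonpos_of_nonpos_of_nonneg (le_of_not_ge h) hL0.le)
      · exact Or.inr (le_of_lt ((one_lt_div hL0).mpr (lt_of_not_ge h)))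
    obtain ⟨hd1, hd2⟩ := sT_derivs_zero (x / L) hx'
    have hF0 : F' x = 0 := by rw [hF'_def]; simp [← hs_def, show deriv s (x / L) = 0 from hd1]
    have hG0 : G' x = 0 := by rw [hG'_def]; simp [← hs_def, show deriv (deriv s) (x / L) = 0 from hd2]
    have hAB : A x * B x = 0 := by
      rcases hx' with h | h
      · have h0 : s (x / L) = 0 := Real.smoothTransition.zero_of_nonpos h
        have : B x = 0 := by rw [hB_def, hf_def]; simp [h0]
        rw [this, mul_zero]
      · have h0 : s (x / L) = 1 := Real.smoothTransition.one_of_one_le h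
        have : A x = 0 := by
          rw [hA_def, hf_def]
          simp [h0, hc_def, Real.cos_pi_div_two]
        rw [this, zero_mul]
    have hA2z : A2 x = 0 := by rw [hA2_def]; simp [hF0, hG0]
    have hPz : Pfun g (A x) (B x) = 0 := by
      have h1 := hsin2 x
      have h2 : A x ^ 2 * B x ^ 2 = 0 := by rw [← mul_pow, hAB]; norm_num
      simp only [Pfun]
      linear_combination ((1/4) * (A x ^ 2 + B x ^ 2 - 1)) * h1 + (1/2)*(g-1) * h2
    rw [hiter, hderivB]
    simp only [hA2z, hF0, hPz]
    ring
  have hmem : memX A B := by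
    refine ⟨?_, ?_, ?_, ?_⟩
    · have hfs : ContDiff ℝ 2 f := by
        rw [hf_def]
        exact contDiff_const.mul
          (Real.smoothTransition.contDiff.comp (contDiff_id.div_const L))
      exact (Real.contDiff_cos.comp hfs :)
    · have hfs : ContDiff ℝ 1 f := by
        rw [hf_def]
        exact contDiff_const.mul
          (Real.smoothTransition.contDiff.comp (contDiff_id.div_const L))
      exact (Real.contDiff_sin.comp hfs :)
    · have hev : ∀ᶠ x in atBot, ((A x, B x) : ℝ × ℝ) = (1, 0) := by
        filter_upwards [eventually_lt_atBot (0:ℝ)] with x hx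
        have h0 : s (x / L) = 0 :=
          Real.smoothTransition.zero_of_nonpos (le_of_lt (div_neg_of_neg_of_pos hx hL0))
        rw [hA_def, hB_def, hf_def]
        simp [h0]
      exact tendsto_const_nhds.congr' (Filter.EventuallyEq.symm hev)
    · have hev : ∀ᶠ x in atTop, ((A x, B x) : ℝ × ℝ) = (0, 1) := by
        filter_upwards [eventually_gt_atTop L] with x hx
        have h0 : s (x / L) = 1 :=
          Real.smoothTransition.one_of_one_le (le_of_lt ((one_lt_div hL0).mpr hx))
        rw [hA_def, hB_def, hf_def]
        simp [h0, hc_def, Real.cos_pi_div_two, Real.sin_pi_div_two]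
      exact tendsto_const_nhds.congr' (Filter.EventuallyEq.symm hev)
  clear_value f F' G' A1 A2 A B s c K C δ r L
  set bd : ℝ := (ϵ/2) * (K * (L⁻¹ * L⁻¹))^2 + (1/2) * (c * (M * L⁻¹))^2 + δ/8 with hbd_def
  have hbd0 : 0 ≤ bd := by rw [hbd_def]; positivity
  have hE : ∀ x, (ϵ/2) * (iteratedDeriv 2 A x) ^ 2
      + (1/2) * (deriv B x) ^ 2 + Pfun g (A x) (B x) ≤ bd := by
    intro x
    have h1 : (iteratedDeriv 2 A x) ^ 2 ≤ (K * (L⁻¹ * L⁻¹))^2 := by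
      rw [hiter, ← sq_abs]
      exact pow_le_pow_left₀ (abs_nonneg _) (hA2bd x) 2
    have h2 : (deriv B x) ^ 2 ≤ (c * (M * L⁻¹))^2 := by
      rw [← sq_abs]
      exact pow_le_pow_left₀ (abs_nonneg _) (hBbd x) 2
    have h3 : Pfun g (A x) (B x) ≤ δ/8 := by
      have hs2 := hsin2 x
      simp only [Pfun, ← hδ_def]
      nlinarith [mul_nonneg hδ0.le (sq_nonneg (A x ^ 2 - B x ^ 2))]
    have e1 : (ϵ/2) * (iteratedDeriv 2 A x)^2 ≤ (ϵ/2) * (K * (L⁻¹ * L⁻¹))^2 :=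
      mul_le_mul_of_nonneg_left h1 (by positivity)
    have e2 : (1/2 : ℝ) * (deriv B x)^2 ≤ (1/2) * (c * (M * L⁻¹))^2 :=
      mul_le_mul_of_nonneg_left h2 (by norm_num)
    rw [hbd_def]
    exact add_le_add (add_le_add e1 e2) h3
  -- the energy bound
  have hJ : Jfun ϵ g A B ≤ ENNReal.ofReal (bd * L) := by
    rw [Jfun]
    have hind : (fun x => ENNReal.ofReal ((ϵ/2) * (iteratedDeriv 2 A x) ^ 2
        + (1/2) * (deriv B x) ^ 2 + Pfun g (A x) (B x)))
        = (Set.Icc (0:ℝ) L).indicator (fun x => ENNReal.ofReal ((ϵ/2) * (iteratedDeriv 2 A x) ^ 2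
        + (1/2) * (deriv B x) ^ 2 + Pfun g (A x) (B x))) := by
      funext x
      by_cases hx : x ∈ Set.Icc (0:ℝ) L
      · rw [Set.indicator_of_mem hx]
      · rw [Set.indicator_of_notMem hx, hE0 x hx, ENNReal.ofReal_zero]
    rw [hind]
    calc ∫⁻ x, (Set.Icc (0:ℝ) L).indicator (fun x => ENNReal.ofReal ((ϵ/2) * (iteratedDeriv 2 A x) ^ 2
        + (1/2) * (deriv B x) ^ 2 + Pfun g (A x) (B x))) x
        ≤ ∫⁻ x, (Set.Icc (0:ℝ) L).indicator (fun _ => ENNReal.ofReal bd) x := by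
          refine lintegral_mono fun x => ?_
          exact Set.indicator_le_indicator (ENNReal.ofReal_le_ofReal (hE x))
      _ = ENNReal.ofReal bd * volume (Set.Icc (0:ℝ) L) :=
          lintegral_indicator_const measurableSet_Icc _
      _ = ENNReal.ofReal bd * ENNReal.ofReal L := by rw [Real.volume_Icc, sub_zero]
      _ = ENNReal.ofReal (bd * L) := (ENNReal.ofReal_mul hbd0).symm
  have hbdL : bd * L ≤ C * r := by
    have hkey : bd ≤ (C * r) * r := by
      rw [hbd_def, hC_def, hLinv]
      have h1 : 0 ≤ (ϵ/2) * K^2 * (r*r) * (1 - r*r) := by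
        have : 0 ≤ 1 - r*r := by nlinarith
        positivity
      nlinarith [hrr]
    calc bd * L = bd * r⁻¹ := by rw [hL_def]
      _ ≤ ((C * r) * r) * r⁻¹ := by gcongr
      _ = C * r := by field_simp
  calc (⨅ (A : ℝ → ℝ) (B : ℝ → ℝ) (_ : memX A B), Jfun ϵ g A B) ≤ Jfun ϵ g A B :=
        iInf_le_of_le A (iInf_le_of_le B (iInf_le _ hmem))
    _ ≤ ENNReal.ofReal (bd * L) := hJ
    _ ≤ ENNReal.ofReal (C * r) := ENNReal.ofReal_le_ofReal hbdL


/-- For every fixed `ϵ > 0` there is `C > 0` such that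
`inf_X J_{ϵ,g} ≤ C(g−1)^{1/2}` for all `g ∈ (1,2]`; in particular
`inf_X J_{ϵ,g} → 0` as `g → 1⁺`. -/
theorem inf_energy_tendsto_zero (ϵ : ℝ) (hϵ : 0 < ϵ) :
    (∃ C > (0 : ℝ), ∀ g ∈ Set.Ioc (1 : ℝ) 2,
      (⨅ (A : ℝ → ℝ) (B : ℝ → ℝ) (_ : memX A B), Jfun ϵ g A B)
        ≤ ENNReal.ofReal (C * Real.sqrt (g - 1))) ∧
    Tendsto (fun g : ℝ => ⨅ (A : ℝ → ℝ) (B : ℝ → ℝ) (_ : memX A B), Jfun ϵ g A B)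
      (nhdsWithin 1 (Set.Ioi 1)) (nhds 0) := by
  obtain ⟨C, hC0, hC⟩ := construction ϵ hϵ
  refine ⟨⟨C, hC0, hC⟩, ?_⟩
  have hub : Tendsto (fun g : ℝ => ENNReal.ofReal (C * Real.sqrt (g - 1)))
      (nhdsWithin 1 (Set.Ioi 1)) (nhds 0) := by
    have hcont : Continuous (fun g : ℝ => C * Real.sqrt (g - 1)) :=
      continuous_const.mul (Real.continuous_sqrt.comp (continuous_id.sub continuous_const))
    have h1 : Tendsto (fun g : ℝ => C * Real.sqrt (g - 1)) (nhds 1) (nhds 0) := by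
      have h := hcont.tendsto 1
      simpa using h
    have h2 := (ENNReal.continuous_ofReal.tendsto 0).comp
      (h1.mono_left (nhdsWithin_le_nhds (s := Set.Ioi 1)))
    simpa [Function.comp_def] using h2
  refine tendsto_of_tendsto_of_tendsto_of_le_of_le' tendsto_const_nhds hub ?_ ?_
  · exact Filter.Eventually.of_forall fun g => zero_le
  · filter_upwards [Ioo_mem_nhdsGT_of_mem
      (by norm_num : (1:ℝ) ∈ Set.Ico (1:ℝ) 2)] with g hg
    exact hC g ⟨hg.1, hg.2.le⟩
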